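/- Let U ∈ H²(𝕋, ℂ^{d×d}). Then for every constant matrix V ∈ ℂ^{d×d} (viewed as a constant function, an element of ℋ), one has B_U(V) = −i L_U²(V), i.e. i T_{|D|U}(V) − i T_U²(V) = −i ( D − T_U )²(V). -/

import Mathlib

open MeasureTheory Complex Matrix
open scoped Real

noncomputable section

instance : Fact (0 < 2 * Real.pi) := ⟨by positivity⟩

/-- The torus `ℝ / 2πℤ`. -/
abbrev Torus := AddCircle (2 * Real.pi)

/-- `d × d` complex matrices. -/
abbrev Mat (d : ℕ) := Matrix (Fin d) (Fin d) ℂ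

/-- Normalized Haar measure (total mass 1) on the torus. -/
abbrev μT : Measure Torus := AddCircle.haarAddCircle

variable {d : ℕ}

/-- Entrywise `n`-th Fourier coefficient of a matrix-valued function on the torus. -/
def mcoeff (f : Torus → Mat d) (n : ℤ) : Mat d :=
  Matrix.of fun i j => fourierCoeff (fun x => f x i j) n

/-- `f ∈ L²(𝕋, ℂ^{d×d})`. -/
def InL2 (f : Torus → Mat d) : Prop :=
  ∀ i j, MemLp (fun x => f x i j) 2 μT

/-- `f ∈ L^∞(𝕋, ℂ^{d×d})`. -/
def InLinf (f : Torus → Mat d) : Prop :=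
  ∀ i j, MemLp (fun x => f x i j) ⊤ μT

/-- `f` belongs to the Sobolev space `H^k(𝕋, ℂ^{d×d})` (Fourier characterization). -/
def InHk (k : ℕ) (f : Torus → Mat d) : Prop :=
  InL2 f ∧ ∀ i j, Summable fun n : ℤ =>
    (n : ℝ) ^ (2 * k) * ‖fourierCoeff (fun x => f x i j) n‖ ^ 2

/-- `f` belongs to the Hardy space `ℋ = L²₊(𝕋, ℂ^{d×d})`: it is `L²` and all its
negatively indexed Fourier coefficients vanish. -/
def IsHardy (f : Torus → Mat d) : Prop :=
  InL2 f ∧ ∀ n : ℤ, n < 0 → mcoeff f n = 0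

/-- `g = Π_{≥0} f`, the Szegő projection of `f` onto the Hardy space. -/
def ProjPosOf (f g : Torus → Mat d) : Prop :=
  InL2 g ∧ ∀ n : ℤ, mcoeff g n = if 0 ≤ n then mcoeff f n else 0

/-- `g = Π_{<0} f = (Id - Π_{≥0}) f`. -/
def ProjNegOf (f g : Torus → Mat d) : Prop :=
  InL2 g ∧ ∀ n : ℤ, mcoeff g n = if n < 0 then mcoeff f n else 0

/-- `g = ∂ₓ f`. -/
def DerivXOf (f g : Torus → Mat d) : Prop :=
  InL2 g ∧ ∀ n : ℤ, mcoeff g n = (Complex.I * (n : ℂ)) • mcoeff f n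

/-- `g = D f` where `D = (1/i) ∂ₓ`. -/
def DOf (f g : Torus → Mat d) : Prop :=
  InL2 g ∧ ∀ n : ℤ, mcoeff g n = (n : ℂ) • mcoeff f n

/-- `g = |D| f`, the Fourier multiplier with symbol `|n|`. -/
def AbsDOf (f g : Torus → Mat d) : Prop :=
  InL2 g ∧ ∀ n : ℤ, mcoeff g n = ((|n| : ℤ) : ℂ) • mcoeff f n

/-- `g = H f`, the Hilbert transform `H = i · sign(D)` (so that `H ∂ₓ = -|D|`). -/
def HilbertOf (f g : Torus → Mat d) : Prop :=
  InL2 g ∧ ∀ n : ℤ, mcoeff g n = (Complex.I * ((n.sign : ℤ) : ℂ)) • mcoeff f n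

/-- `g = T_u f = Π_{≥0}(u f)`, the Toeplitz operator of symbol `u` applied to `f`. -/
def ToeplitzOf (u f g : Torus → Mat d) : Prop :=
  ProjPosOf (fun x => u x * f x) g

/-- `g = L_u f = D f - T_u f`, the Lax operator applied to `f`. -/
def LaxOf (u f g : Torus → Mat d) : Prop :=
  ∃ df tf, DOf f df ∧ ToeplitzOf u f tf ∧ ∀ᵐ x ∂μT, g x = df x - tf x

/-- `g = L_u^n f`, iterates of the Lax operator. -/
def LaxIterOf (u : Torus → Mat d) : ℕ → (Torus → Mat d) → (Torus → Mat d) → Prop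
  | 0, f, g => ∀ᵐ x ∂μT, g x = f x
  | n + 1, f, g => ∃ h, LaxIterOf u n f h ∧ LaxOf u h g

/-- `g = B_u f = i (T_{|D|u} - T_u²) f`. -/
def BOf (u f g : Torus → Mat d) : Prop :=
  ∃ w t1 t2 t3, AbsDOf u w ∧ ToeplitzOf w f t1 ∧ ToeplitzOf u f t2 ∧
    ToeplitzOf u t2 t3 ∧ ∀ᵐ x ∂μT, g x = Complex.I • (t1 x - t3 x)

/-- The inner product `⟨f|g⟩ = ∫ tr (f g*)` on `L²(𝕋, ℂ^{d×d})`. -/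
def hinner (f g : Torus → Mat d) : ℂ :=
  ∫ x, (f x * (g x)ᴴ).trace ∂μT

/-- The mean value `⟨f⟩` of a matrix-valued function on the torus (whose measure is
normalized to total mass 1). -/
def mint (f : Torus → Mat d) : Mat d :=
  Matrix.of fun i j => ∫ x, f x i j ∂μT

/-- Squared (Frobenius) norm of a matrix. -/
def matNormSq (M : Mat d) : ℝ := ∑ i, ∑ j, ‖M i j‖ ^ 2

/-- Squared Sobolev `H^k` norm, via Fourier coefficients (for `k = 0` this is the
squared `L²` norm, by Parseval). -/
def sobNormSq (k : ℕ) (f : Torus → Mat d) : ℝ :=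
  ∑' n : ℤ, (1 + (n : ℝ) ^ 2) ^ k * matNormSq (mcoeff f n)

/-- `f` takes Hermitian values (a.e.). -/
def IsHermitianValued (f : Torus → Mat d) : Prop :=
  ∀ᵐ x ∂μT, (f x)ᴴ = f x

/-- `t ↦ U t` is continuous from `I` into `H^k(𝕋, ℂ^{d×d})`. -/
def ContInHk (k : ℕ) (I : Set ℝ) (U : ℝ → Torus → Mat d) : Prop :=
  ∀ t ∈ I, ∀ ε > 0, ∃ δ > 0, ∀ s ∈ I, |s - t| < δ →
    sobNormSq k (fun x => U s x - U t x) < ε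

/-- `V = ∂ₜ U` on `I`, in the sense of differentiability in `L²(𝕋, ℂ^{d×d})`. -/
def HasL2DerivOn (I : Set ℝ) (U V : ℝ → Torus → Mat d) : Prop :=
  ∀ t ∈ I, ∀ ε > 0, ∃ δ > 0, ∀ s ∈ I, |s - t| < δ →
    sobNormSq 0 (fun x => U s x - U t x - (s - t) • V t x) ≤ ε * (s - t) ^ 2

/-- `U`, with time derivative `∂ₜ U = V`, solves the spin Benjamin–Ono equation
`∂ₜ U = ∂ₓ (|D|U - U²) - i [U, |D|U]` on the time interval `I`. -/
def SolvesSBO (I : Set ℝ) (U V : ℝ → Torus → Mat d) : Prop :=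
  ∀ t ∈ I, ∀ w g : Torus → Mat d, AbsDOf (U t) w →
    DerivXOf (fun x => w x - U t x * U t x) g →
    ∀ᵐ x ∂μT, V t x = g x - Complex.I • (U t x * w x - w x * U t x)

/-! The constant `V` has no Fourier modes besides `0`, so `D V = 0` and `L_U V = -T_U V`;
hence `L_U² V = -D T_U V + T_U² V`. The Fourier coefficients of `T_U V` are those of `U V`
at frequencies `n ≥ 0`, where the symbols `n` of `D` and `|n|` of `|D|` agree, so
`D T_U V = T_{|D|U} V` and `-L_U² V = (T_{|D|U} - T_U²) V`. -/

section FourierCoeff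

variable {T : ℝ} [Fact (0 < T)]

theorem fourierCoeff_neg {E : Type*} [NormedAddCommGroup E] [NormedSpace ℂ E]
    (f : AddCircle T → E) (n : ℤ) : fourierCoeff (fun x => -f x) n = -fourierCoeff f n := by
  simp [fourierCoeff, integral_neg]

theorem fourierCoeff_const (c : ℂ) (n : ℤ) :
    fourierCoeff (fun _ : AddCircle T => c) n = if n = 0 then c else 0 := by
  have hc : (fun _ : AddCircle T => c) = c • ⇑(fourier 0 : C(AddCircle T, ℂ)) := by
    ext x; simp
  rw [hc, fourierCoeff.const_smul, fourierCoeff_fourier]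
  split_ifs with hn <;> simp [hn]

theorem ae_eq_of_fourierCoeff_eq {f g : AddCircle T → ℂ}
    (hf : MemLp f 2 AddCircle.haarAddCircle) (hg : MemLp g 2 AddCircle.haarAddCircle)
    (h : ∀ n, fourierCoeff f n = fourierCoeff g n) : f =ᵐ[AddCircle.haarAddCircle] g := by
  have hfg : hf.toLp f = hg.toLp g := by
    refine fourierBasis.repr.injective (lp.ext (funext fun n => ?_))
    rw [fourierBasis_repr, fourierBasis_repr, fourierCoeff_congr_ae hf.coeFn_toLp,
      fourierCoeff_congr_ae hg.coeFn_toLp]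
    exact h n
  exact hf.coeFn_toLp.symm.trans (hfg ▸ hg.coeFn_toLp)

end FourierCoeff

section MatrixFourier

variable {f g : Torus → Mat d}

theorem InL2.neg (hf : InL2 f) : InL2 fun x => -f x :=
  fun i j => (hf i j).neg

theorem inL2_const (V : Mat d) : InL2 fun _ : Torus => V :=
  fun _ _ => memLp_const _

theorem mcoeff_congr_ae (h : f =ᵐ[μT] g) (n : ℤ) : mcoeff f n = mcoeff g n := by
  ext i j
  exact congrFun (fourierCoeff_congr_ae (h.mono fun x hx => by rw [hx])) n

theorem mcoeff_neg (f : Torus → Mat d) (n : ℤ) : mcoeff (fun x => -f x) n = -mcoeff f n := by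
  ext i j
  exact fourierCoeff_neg _ n

theorem mcoeff_const (V : Mat d) (n : ℤ) :
    mcoeff (fun _ : Torus => V) n = if n = 0 then V else 0 := by
  ext i j
  simp only [mcoeff, of_apply, fourierCoeff_const]
  split_ifs <;> rfl

theorem mcoeff_mul_const (hf : InL2 f) (C : Mat d) (n : ℤ) :
    mcoeff (fun x => f x * C) n = mcoeff f n * C := by
  ext i j
  simp only [mcoeff, of_apply, mul_apply]
  rw [← Finset.sum_fn, fourierCoeff.sum _ _ fun k _ => ((hf i k).integrable one_le_two).mul_const _]
  simp only [Finset.sum_apply, mul_comm _ (C _ j), fourierCoeff.const_mul]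

theorem ae_eq_of_mcoeff_eq (hf : InL2 f) (hg : InL2 g) (h : ∀ n, mcoeff f n = mcoeff g n) :
    f =ᵐ[μT] g := by
  have hij : ∀ i j, ∀ᵐ x ∂μT, f x i j = g x i j := fun i j =>
    ae_eq_of_fourierCoeff_eq (hf i j) (hg i j) fun n => congrFun (congrFun (h n) i) j
  simp only [← ae_all_iff] at hij
  filter_upwards [hij] with x hx
  exact Matrix.ext hx

end MatrixFourier

section Operators

variable {u f g f' g' : Torus → Mat d}

theorem DOf.ae_eq_of_ae_eq (hg : DOf f g) (hg' : DOf f' g') (hf : f =ᵐ[μT] f') :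
    g =ᵐ[μT] g' :=
  ae_eq_of_mcoeff_eq hg.1 hg'.1 fun n => by rw [hg.2, hg'.2, mcoeff_congr_ae hf]

theorem DOf.neg (hg : DOf f g) : DOf (fun x => -f x) (fun x => -g x) :=
  ⟨hg.1.neg, fun n => by rw [mcoeff_neg, mcoeff_neg, hg.2, smul_neg]⟩

theorem dOf_const (V : Mat d) : DOf (fun _ : Torus => V) (fun _ => 0) :=
  ⟨inL2_const 0, fun n => by rw [mcoeff_const, mcoeff_const]; split_ifs with hn <;> simp [hn]⟩

theorem ToeplitzOf.ae_eq_of_ae_eq (hg : ToeplitzOf u f g) (hg' : ToeplitzOf u f' g')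
    (hf : f =ᵐ[μT] f') : g =ᵐ[μT] g' := by
  refine ae_eq_of_mcoeff_eq hg.1 hg'.1 fun n => ?_
  rw [hg.2, hg'.2, mcoeff_congr_ae (hf.mono fun x hx => by rw [hx])]

theorem ToeplitzOf.neg (hg : ToeplitzOf u f g) : ToeplitzOf u (fun x => -f x) (fun x => -g x) := by
  refine ⟨hg.1.neg, fun n => ?_⟩
  simp only [Matrix.mul_neg, mcoeff_neg, hg.2]
  split_ifs <;> simp

theorem ToeplitzOf.mcoeff_of_const (hu : InL2 u) {V : Mat d} {t : Torus → Mat d}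
    (ht : ToeplitzOf u (fun _ => V) t) (n : ℤ) :
    mcoeff t n = if 0 ≤ n then mcoeff u n * V else 0 := by
  rw [ht.2, mcoeff_mul_const hu]

theorem dOf_toeplitzOf_const (hu : InL2 u) {V : Mat d} {w t t' : Torus → Mat d}
    (ht : ToeplitzOf u (fun _ => V) t) (hw : AbsDOf u w) (ht' : ToeplitzOf w (fun _ => V) t') :
    DOf t t' := by
  refine ⟨ht'.1, fun n => ?_⟩
  rw [ht.mcoeff_of_const hu, ht'.mcoeff_of_const hw.1, hw.2]
  split_ifs with hn
  · rw [abs_of_nonneg hn, smul_mul_assoc]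
  · rw [smul_zero]

theorem LaxOf.ae_eq_neg_toeplitzOf_const {V : Mat d} {t : Torus → Mat d}
    (hg : LaxOf u (fun _ => V) g) (ht : ToeplitzOf u (fun _ => V) t) :
    g =ᵐ[μT] fun x => -t x := by
  obtain ⟨df, tf, hdf, htf, hg⟩ := hg
  have hdf0 := hdf.ae_eq_of_ae_eq (dOf_const V) Filter.EventuallyEq.rfl
  have htf_eq := htf.ae_eq_of_ae_eq ht Filter.EventuallyEq.rfl
  filter_upwards [hg, hdf0, htf_eq] with x hx hdx htx
  rw [hx, hdx, htx, zero_sub]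

end Operators

theorem B_on_constants_general {d : ℕ}
    (U : Torus → Mat d) (hU : InHk 2 U) (V : Mat d) :
    ∀ G L1 L2 : Torus → Mat d,
      BOf U (fun _ => V) G →
      LaxOf U (fun _ => V) L1 → LaxOf U L1 L2 →
      ∀ᵐ x ∂μT, G x = -Complex.I • L2 x := by
  rintro G L1 L2 ⟨w, t1, t2, t3, hw, ht1, ht2, ht3, hG⟩ hL1 ⟨df, tf, hdf, htf, hL2⟩
  have hL1 : L1 =ᵐ[μT] fun x => -t2 x := hL1.ae_eq_neg_toeplitzOf_const ht2
  have hdf : df =ᵐ[μT] fun x => -t1 x :=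
    hdf.ae_eq_of_ae_eq (dOf_toeplitzOf_const hU.1 ht2 hw ht1).neg hL1
  have htf : tf =ᵐ[μT] fun x => -t3 x := htf.ae_eq_of_ae_eq ht3.neg hL1
  filter_upwards [hG, hL2, hdf, htf] with x hGx hL2x hdfx htfx
  rw [hGx, hL2x, hdfx, htfx, neg_sub_neg, neg_smul, ← smul_neg, neg_sub]

/-- For `U ∈ H²(𝕋, ℂ^{d×d})` and every constant matrix `V ∈ ℂ^{d×d}` (viewed as a
constant function in `ℋ`), one has `B_U(V) = -i L_U²(V)`, i.e.
`i T_{|D|U}(V) - i T_U²(V) = -i (D - T_U)²(V)`. -/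
theorem B_on_constants {d : ℕ} (hd : 1 ≤ d)
    (U : Torus → Mat d) (hU : InHk 2 U) (V : Mat d) :
    ∀ G L1 L2 : Torus → Mat d,
      BOf U (fun _ => V) G →
      LaxOf U (fun _ => V) L1 → LaxOf U L1 L2 →
      ∀ᵐ x ∂μT, G x = -Complex.I • L2 x :=
  B_on_constants_general U hU V
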